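/- arXiv:2106.08289 — 5 statements merged into one kernel-verified Lean document; each statement's English description precedes it below -/
import Mathlib

section
/- Let X be a medial quandle and k a field. Then the subspace J_X of the quandle algebra k[X] spanned by the elements e_{x▷y} − e_{y▷x} for all x, y ∈ X is a two-sided ideal of k[X]; in particular, for every v ∈ J_X and every a ∈ k[X] one has a·v ∈ J_X. -/
/-- The quandle algebra multiplication on `X →₀ k`, as a bilinear map,
determined on basis vectors by `e_x · e_y = e_{op x y}`. -/
noncomputable def qmul {k X : Type*} [Field k] (op : X → X → X) :
    (X →₀ k) →ₗ[k] (X →₀ k) →ₗ[k] (X →₀ k) :=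
  Finsupp.lsum k fun x =>
    LinearMap.toSpanSingleton k ((X →₀ k) →ₗ[k] (X →₀ k))
      (Finsupp.lsum k fun y =>
        LinearMap.toSpanSingleton k (X →₀ k) (Finsupp.single (op x y) (1 : k)))

/-- A derivation of the quandle algebra: a linear map satisfying the Leibniz rule. -/
def IsDerivation {k X : Type*} [Field k] (op : X → X → X)
    (D : (X →₀ k) →ₗ[k] (X →₀ k)) : Prop :=
  ∀ a b : X →₀ k, D (qmul op a b) = qmul op (D a) b + qmul op a (D b)

/-! Right multiplication by `t` is an endomorphism of `X` by right distributivity; left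
multiplication is one for a medial quandle, since `t = t ▷ t`. Hence both permute the generators
`e_{x▷y} - e_{y▷x}` of `J_X`, and bilinearity spreads this to all of `J_X` and `k[X]`. -/

theorem Submodule.apply_mem_of_mem_span_of_mem_span {R M N P : Type*} [CommSemiring R]
    [AddCommMonoid M] [AddCommMonoid N] [AddCommMonoid P] [Module R M] [Module R N]
    [Module R P] (f : M →ₗ[R] N →ₗ[R] P) {s : Set M} {t : Set N} {p : Submodule R P}
    (h : ∀ x ∈ s, ∀ y ∈ t, f x y ∈ p) {x : M} {y : N} (hx : x ∈ span R s)
    (hy : y ∈ span R t) : f x y ∈ p := by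
  have hxy := apply_mem_map₂ f hx hy
  rw [map₂_span_span] at hxy
  exact span_le.2 (by rintro _ ⟨a, ha, b, hb, rfl⟩; exact h a ha b hb) hxy

theorem op_left_distrib_of_medial {X : Type*} {op : X → X → X} (idem : ∀ x, op x x = x)
    (medial : ∀ x y z w, op (op x y) (op z w) = op (op x z) (op y w)) (t x y : X) :
    op t (op x y) = op (op t x) (op t y) := by
  conv_lhs => rw [← idem t, medial]

section QuandleAlgebra

variable {k X : Type*} [Field k] (op : X → X → X)

@[simp]
theorem qmul_single_single (s t : X) :
    qmul op (Finsupp.single s (1 : k)) (Finsupp.single t 1) = Finsupp.single (op s t) 1 := by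
  simp [qmul, LinearMap.toSpanSingleton_apply]

/-- The subspace `J_X` of `k[X]`. -/
noncomputable def commutatorSpan : Submodule k (X →₀ k) :=
  Submodule.span k
    {w : X →₀ k | ∃ x y, w = Finsupp.single (op x y) 1 - Finsupp.single (op y x) 1}

theorem mem_span_range_single_one (a : X →₀ k) :
    a ∈ Submodule.span k (Set.range fun t => Finsupp.single t (1 : k)) := by
  rw [← Finsupp.coe_basisSingleOne, Finsupp.basisSingleOne.span_eq]
  trivial

variable {op}

theorem qmul_mem_commutatorSpan_of_right_distrib
    (distrib : ∀ x y z, op (op x y) z = op (op x z) (op y z))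
    {v : X →₀ k} (hv : v ∈ commutatorSpan op) (a : X →₀ k) :
    qmul op v a ∈ commutatorSpan op := by
  refine Submodule.apply_mem_of_mem_span_of_mem_span _ ?_ hv (mem_span_range_single_one a)
  rintro _ ⟨x, y, rfl⟩ _ ⟨t, rfl⟩
  rw [map_sub, LinearMap.sub_apply, qmul_single_single, qmul_single_single, distrib x y t,
    distrib y x t]
  exact Submodule.subset_span ⟨op x t, op y t, rfl⟩

theorem qmul_mem_commutatorSpan_of_left_distrib
    (distrib : ∀ t x y, op t (op x y) = op (op t x) (op t y))
    {v : X →₀ k} (hv : v ∈ commutatorSpan op) (a : X →₀ k) :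
    qmul op a v ∈ commutatorSpan op := by
  refine Submodule.apply_mem_of_mem_span_of_mem_span _ ?_ (mem_span_range_single_one a) hv
  rintro _ ⟨t, rfl⟩ _ ⟨x, y, rfl⟩
  rw [map_sub, qmul_single_single, qmul_single_single, distrib t x y, distrib t y x]
  exact Submodule.subset_span ⟨op t x, op t y, rfl⟩

end QuandleAlgebra

theorem two_sided_ideal_JX_medial_general {k X : Type*} [Field k] (op : X → X → X)
    (idem : ∀ x, op x x = x)
    (distrib : ∀ x y z, op (op x y) z = op (op x z) (op y z))
    (medial : ∀ x y z w, op (op x y) (op z w) = op (op x z) (op y w)) :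
    ∀ v ∈ Submodule.span k
      {w : X →₀ k | ∃ x y, w = Finsupp.single (op x y) 1 - Finsupp.single (op y x) 1},
      ∀ a : X →₀ k,
        qmul op v a ∈ Submodule.span k
          {w : X →₀ k | ∃ x y, w = Finsupp.single (op x y) 1 - Finsupp.single (op y x) 1} ∧
        qmul op a v ∈ Submodule.span k
          {w : X →₀ k | ∃ x y, w = Finsupp.single (op x y) 1 - Finsupp.single (op y x) 1} :=
  fun _ hv a =>
    ⟨qmul_mem_commutatorSpan_of_right_distrib distrib hv a,
      qmul_mem_commutatorSpan_of_left_distrib (op_left_distrib_of_medial idem medial) hv a⟩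

/-- For a medial quandle `(X, op)` and field `k`, the subspace `J_X` of `k[X]` spanned by the
elements `e_{x▷y} - e_{y▷x}` is a two-sided ideal: in particular `a · v ∈ J_X` (and also
`v · a ∈ J_X`) for all `v ∈ J_X` and `a ∈ k[X]`. -/
theorem two_sided_ideal_JX_medial {k X : Type*} [Field k] (op : X → X → X)
    (idem : ∀ x, op x x = x)
    (rbij : ∀ y, Function.Bijective fun x => op x y)
    (distrib : ∀ x y z, op (op x y) z = op (op x z) (op y z))
    (medial : ∀ x y z w, op (op x y) (op z w) = op (op x z) (op y w)) :
    ∀ v ∈ Submodule.span k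
      {w : X →₀ k | ∃ x y, w = Finsupp.single (op x y) 1 - Finsupp.single (op y x) 1},
      ∀ a : X →₀ k,
        qmul op v a ∈ Submodule.span k
          {w : X →₀ k | ∃ x y, w = Finsupp.single (op x y) 1 - Finsupp.single (op y x) 1} ∧
        qmul op a v ∈ Submodule.span k
          {w : X →₀ k | ∃ x y, w = Finsupp.single (op x y) 1 - Finsupp.single (op y x) 1} :=
  two_sided_ideal_JX_medial_general op idem distrib medial
end

section
/- Let X be a finite trivial quandle (x▷y = x for all x,y) and k a field. A k-linear map D : k[X] → k[X] is a derivation of the quandle algebra k[X] if and only if the image of D is contained in the augmentation ideal I_X; equivalently, writing D(e_x) = Σ_u c_x^u e_u, if and only if Σ_u c_x^u = 0 for every x ∈ X. -/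
/-- The augmentation `ε`; its kernel is the augmentation ideal `I_X`. -/
noncomputable def augmentation (k X : Type*) [CommSemiring k] [Fintype X] : (X →₀ k) →ₗ[k] k :=
  ∑ u : X, Finsupp.lapply u

@[simp]
lemma augmentation_apply {k X : Type*} [CommSemiring k] [Fintype X] (a : X →₀ k) :
    augmentation k X a = ∑ u : X, a u := by
  simp [augmentation]

lemma Finsupp.forall_map_eq_zero_iff_single_one {R M X : Type*} [Semiring R] [AddCommMonoid M]
    [Module R M] (f : (X →₀ R) →ₗ[R] M) :
    (∀ a, f a = 0) ↔ ∀ x, f (Finsupp.single x 1) = 0 :=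
  ⟨fun h _ => h _, fun h => LinearMap.congr_fun (Finsupp.basisSingleOne.ext (f₂ := 0) h)⟩

lemma qmul_single_single_s3 {k X : Type*} [Field k] (op : X → X → X) (x y : X) (c d : k) :
    qmul op (Finsupp.single x c) (Finsupp.single y d) = Finsupp.single (op x y) (c * d) := by
  simp [qmul, Finsupp.smul_single]

lemma qmul_trivial {k X : Type*} [Field k] [Fintype X] (a b : X →₀ k) :
    qmul (fun x _ : X => x) a b = augmentation k X b • a := by
  induction a using Finsupp.induction_linear with
  | zero => simp
  | add f g hf hg => simp only [map_add, LinearMap.add_apply, hf, hg, smul_add]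
  | single x c =>
    induction b using Finsupp.induction_linear with
    | zero => simp
    | add f g hf hg => simp only [map_add, hf, hg, add_smul]
    | single y d => simp [qmul_single_single_s3, Finsupp.smul_single, mul_comm]

lemma isDerivation_trivial_iff {k X : Type*} [Field k] [Fintype X]
    (D : (X →₀ k) →ₗ[k] (X →₀ k)) :
    IsDerivation (fun x _ : X => x) D ↔ ∀ a, augmentation k X (D a) = 0 := by
  have leibniz_iff : IsDerivation (fun x _ : X => x) D ↔
      ∀ a b : X →₀ k, augmentation k X (D b) • a = 0 := by
    simp only [IsDerivation, qmul_trivial, map_smul, left_eq_add]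
  rw [leibniz_iff]
  refine ⟨fun h b => ?_, fun h a b => by rw [h b, zero_smul]⟩
  -- Take `a = D b`, so that no element of `X` needs to be chosen.
  rcases smul_eq_zero.mp (h (D b) b) with hε | hD
  · exact hε
  · rw [hD, map_zero]

/-- For a finite trivial quandle (`x ▷ y = x`), a linear map `D` on `k[X]` is a derivation iff
its image lies in the augmentation ideal, i.e. iff the coefficients of `D` satisfy
`Σ_u c_x^u = 0` for every `x`. -/
theorem derivation_trivial_quandle_iff {k X : Type*} [Field k] [Fintype X]
    (D : (X →₀ k) →ₗ[k] (X →₀ k)) :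
    (IsDerivation (fun x _ : X => x) D ↔ ∀ a : X →₀ k, ∑ u : X, D a u = 0) ∧
    (IsDerivation (fun x _ : X => x) D ↔ ∀ x : X, ∑ u : X, D (Finsupp.single x 1) u = 0) := by
  have h := isDerivation_trivial_iff D
  refine ⟨by simpa using h, h.trans ?_⟩
  simpa using Finsupp.forall_map_eq_zero_iff_single_one (augmentation k X ∘ₗ D)
end

section
/- Let G be a group, k a field, and consider the quandle algebra k[G] of the conjugation quandle on G (with operation u▷v = v⁻¹uv). Let x be an element of the center Z(G) of G. Then the k-linear map D_x : k[G] → k[G] defined on basis elements by D_x(e_y) = e_y − e_{yx} (where yx denotes group multiplication) and extended linearly is a derivation of k[G]. -/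
/-!
Write `F` for the linear extension of `y ↦ yx`. Since `x` is central, `F` is a right translation
that commutes with the quandle operation in its first argument, `(yx) ▷ v = (y ▷ v) x`, and is
invisible in its second, `u ▷ (vx) = u ▷ v`. Hence `F(a) · b = F(a · b)` and `a · F(b) = a · b`,
so for `D = 1 - F` the Leibniz defect `D(a) · b + a · D(b) - D(a · b)` collapses to
`a · b - a · F(b) = 0`.
-/

section QuandleAlgebra

variable {k X : Type*} [Field k] (op : X → X → X)

theorem qmul_single (u v : X) (c d : k) :
    qmul op (Finsupp.single u c) (Finsupp.single v d) = Finsupp.single (op u v) (c * d) := by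
  simp [qmul, LinearMap.toSpanSingleton_apply, Finsupp.smul_single]

variable {op} {f : X → X}

theorem qmul_mapDomain_left (hf : ∀ u v, op (f u) v = f (op u v)) (a b : X →₀ k) :
    qmul op (Finsupp.mapDomain f a) b = Finsupp.mapDomain f (qmul op a b) := by
  induction a using Finsupp.induction_linear with
  | zero => simp
  | add a a' ha ha' => simp only [Finsupp.mapDomain_add, map_add, LinearMap.add_apply, ha, ha']
  | single u c =>
    induction b using Finsupp.induction_linear with
    | zero => simp
    | add b b' hb hb' => simp only [map_add, Finsupp.mapDomain_add, hb, hb']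
    | single v d => simp only [Finsupp.mapDomain_single, qmul_single, hf]

theorem qmul_mapDomain_right (hf : ∀ u v, op u (f v) = op u v) (a b : X →₀ k) :
    qmul op a (Finsupp.mapDomain f b) = qmul op a b := by
  induction a using Finsupp.induction_linear with
  | zero => simp
  | add a a' ha ha' => simp only [map_add, LinearMap.add_apply, ha, ha']
  | single u c =>
    induction b using Finsupp.induction_linear with
    | zero => simp
    | add b b' hb hb' => simp only [map_add, Finsupp.mapDomain_add, hb, hb']
    | single v d => simp only [Finsupp.mapDomain_single, qmul_single, hf]

theorem isDerivation_id_sub_lmapDomain (hleft : ∀ u v, op (f u) v = f (op u v))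
    (hright : ∀ u v, op u (f v) = op u v) :
    IsDerivation op (LinearMap.id - Finsupp.lmapDomain k k f) := by
  intro a b
  simp only [LinearMap.sub_apply, LinearMap.id_apply, Finsupp.lmapDomain_apply, map_sub,
    qmul_mapDomain_left hleft, qmul_mapDomain_right hright]
  abel

end QuandleAlgebra

/-- For a group `G` and a central element `x ∈ Z(G)`, the linear map
`D_x(e_y) = e_y - e_{yx}` is a derivation of the quandle algebra `k[G]` of the conjugation
quandle `u ▷ v = v⁻¹ u v`. -/
theorem central_translation_derivation {k G : Type*} [Field k] [Group G]
    (x : G) (hx : x ∈ Subgroup.center G) :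
    IsDerivation (fun u v : G => v⁻¹ * u * v)
      ((LinearMap.id : (G →₀ k) →ₗ[k] (G →₀ k)) -
        Finsupp.lmapDomain k k (fun y : G => y * x)) := by
  have hcomm : ∀ g, g * x = x * g := Subgroup.mem_center_iff.mp hx
  refine isDerivation_id_sub_lmapDomain (fun u v => ?_) (fun u v => ?_)
  · simp only [mul_assoc, ← hcomm v]
  · calc (v * x)⁻¹ * u * (v * x) = x⁻¹ * (v⁻¹ * u * v * x) := by group
      _ = v⁻¹ * u * v := by rw [hcomm, inv_mul_cancel_left]
end

section
/- Let k be a field of characteristic zero, let K ≥ 1, set n = 4K, and let X = Z_n be the dihedral quandle (x▷y = 2y − x in Z_n). Let D be a derivation of the quandle algebra k[X], with matrix coefficients defined by D(e_t) = Σ_x c_t^x e_x. Then for all t, x, d ∈ Z_n (all index arithmetic in Z_n): c_{t+2d}^x = c_t^{2t+2d−x}, c_t^x = −c_t^{x+2K}, and c_t^x = c_{t+2K}^{x+2K}. -/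
open Finsupp

theorem Finsupp.eq_zero_of_mapDomain_eq_two_nsmul {X M : Type*} [Finite X] [AddCommGroup M]
    [IsAddTorsionFree M] {f : X → X} {Φ : X →₀ M} (h : mapDomain f Φ = 2 • Φ) : Φ = 0 := by
  have iterate : ∀ r, mapDomain f^[r] Φ = 2 ^ r • Φ := by
    intro r
    induction r with
    | zero => simp [mapDomain_id]
    | succ r ih =>
      rw [Function.iterate_succ, mapDomain_comp, h, mapDomain_smul, ih, pow_succ, mul_nsmul]
  obtain ⟨r, r', hne, heq⟩ := Finite.exists_ne_map_eq_of_infinite fun r : ℕ => f^[r]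
  have : (2 ^ r - 2 ^ r' : ℤ) • Φ = 0 := by
    rw [sub_smul, sub_eq_zero]
    exact_mod_cast (iterate r).symm.trans ((congrArg (mapDomain · Φ) heq).trans (iterate r'))
  refine (IsAddTorsionFree.zsmul_eq_zero_iff_right ?_).1 this
  rw [sub_ne_zero]
  exact fun h2 => hne (Nat.pow_right_injective le_rfl (by exact_mod_cast h2))

theorem Finsupp.mapDomain_apply_eq_sum_filter {α β M : Type*} [Fintype α] [DecidableEq β]
    [AddCommMonoid M] (f : α → β) (v : α →₀ M) (y : β) :
    mapDomain f v y = ∑ x with f x = y, v x := by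
  rw [mapDomain, Finsupp.sum_apply, Finsupp.sum_fintype _ _ (by simp), Finset.sum_filter]
  simp only [single_apply]

theorem ZMod.two_mul_eq_zero_iff {n m : ℕ} [NeZero n] (hn : n = 2 * m) {y : ZMod n} :
    2 * y = 0 ↔ y = 0 ∨ y = m := by
  subst hn
  constructor
  · intro h
    obtain ⟨j, hj⟩ : 2 * m ∣ 2 * y.val := by
      rw [← ZMod.natCast_eq_zero_iff]
      push_cast
      rwa [ZMod.natCast_zmod_val]
    have hlt := ZMod.val_lt y
    have hval : y.val = m * j := by linarith
    have hj2 : j < 2 := by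
      by_contra!
      nlinarith
    rw [← ZMod.natCast_zmod_val y, hval]
    interval_cases j <;> simp
  · rintro (rfl | rfl)
    · rw [mul_zero]
    · exact_mod_cast ZMod.natCast_self (2 * m)

theorem ZMod.two_mul_eq_two_mul_iff {n m : ℕ} [NeZero n] (hn : n = 2 * m) {x y : ZMod n} :
    2 * y = 2 * x ↔ y = x ∨ y = x + m := by
  rw [← sub_eq_zero, ← mul_sub, ZMod.two_mul_eq_zero_iff hn, sub_eq_zero, sub_eq_iff_eq_add']

section
variable {k X : Type*} [Field k] (op : X → X → X)

theorem qmul_single_left (a : X) (g : X →₀ k) :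
    qmul op (single a 1) g = mapDomain (op a) g := by
  simp only [qmul, lsum_apply, mapDomain]
  ext
  simp

theorem qmul_single_right (f : X →₀ k) (b : X) :
    qmul op f (single b 1) = mapDomain (op · b) f := by
  simp [qmul, mapDomain]

end

namespace IsDerivation

variable {k X : Type*} [Field k] {op : X → X → X} {D : (X →₀ k) →ₗ[k] (X →₀ k)}

theorem map_single_op (hD : IsDerivation op D) (a b : X) :
    D (single (op a b) 1) =
      mapDomain (op · b) (D (single a 1)) + mapDomain (op a) (D (single b 1)) := by
  simpa only [qmul_single_left, qmul_single_right, mapDomain_single] using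
    hD (single a 1) (single b 1)

theorem mapDomain_op_self_eq_zero [Finite X] [CharZero k] (hD : IsDerivation op D)
    (hidem : ∀ x, op x x = x) (hinv : ∀ x y, op (op x y) y = x)
    (hdist : ∀ x y z, op (op x y) z = op (op x z) (op y z)) (t : X) :
    mapDomain (op t) (D (single t 1)) = 0 := by
  set δ := D (single t 1)
  set Φ := mapDomain (op t) δ
  have hδ : δ = mapDomain (op · t) δ + Φ := by simpa only [hidem] using hD.map_single_op t t
  have hσσ : (op · t) ∘ (op · t) = id := funext fun x => hinv x t
  have hτσ : op t ∘ (op · t) = (op · t) ∘ op t := funext fun x => by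
    simp only [Function.comp_apply, hdist t x t, hidem]
  have hσδ : mapDomain (op · t) δ = δ + mapDomain (op · t) Φ := by
    conv_lhs => rw [hδ]
    rw [mapDomain_add, ← mapDomain_comp, hσσ, mapDomain_id]
  have hΦ : Φ = mapDomain (op · t) Φ + mapDomain (op t) Φ := by
    conv_lhs => change mapDomain (op t) δ; rw [hδ]
    rw [mapDomain_add, ← mapDomain_comp, hτσ, mapDomain_comp]
  refine Finsupp.eq_zero_of_mapDomain_eq_two_nsmul (f := op t) ?_
  rw [two_nsmul]
  linear_combination (norm := abel) hσδ + hδ - hΦ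

end IsDerivation

section Dihedral

variable {k : Type*} [Field k] [CharZero k] {n : ℕ} [NeZero n]
  {D : (ZMod n →₀ k) →ₗ[k] (ZMod n →₀ k)}

theorem IsDerivation.dihedral_mapDomain_eq_zero
    (hD : IsDerivation (fun x y : ZMod n => 2 * y - x) D) (a b : ZMod n) :
    mapDomain (fun v => 2 * v - a) (D (single b 1)) = 0 := by
  have hb := hD.mapDomain_op_self_eq_zero (by intro; ring) (by intros; ring) (by intros; ring) b
  have htrans : (fun v => 2 * v - a) = (· + (b - a)) ∘ (fun v => 2 * v - b) := by
    funext v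
    simp only [Function.comp_apply]
    ring
  rw [htrans, mapDomain_comp, hb, mapDomain_zero]

theorem IsDerivation.dihedral_apply_single_add_two_mul
    (hD : IsDerivation (fun x y : ZMod n => 2 * y - x) D) (t d x : ZMod n) :
    D (single (t + 2 * d) 1) x = D (single t 1) (2 * t + 2 * d - x) := by
  have h := hD.map_single_op t (t + d)
  rw [hD.dihedral_mapDomain_eq_zero, add_zero, show 2 * (t + d) - t = t + 2 * d by ring] at h
  rw [h]
  conv_lhs => rw [← sub_sub_cancel (2 * (t + d)) x]
  rw [mapDomain_apply sub_right_injective]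
  congr 1
  ring

theorem IsDerivation.dihedral_apply_add_apply_add_two_mul_eq_zero
    {K : ℕ} [NeZero K] {D : (ZMod (4 * K) →₀ k) →ₗ[k] (ZMod (4 * K) →₀ k)}
    (hD : IsDerivation (fun x y : ZMod (4 * K) => 2 * y - x) D) (t x : ZMod (4 * K)) :
    D (single t 1) x + D (single t 1) (x + 2 * K) = 0 := by
  have hfib (v : ZMod (4 * K)) : 2 * v = 2 * x ↔ v = x ∨ v = x + 2 * K := by
    exact_mod_cast ZMod.two_mul_eq_two_mul_iff (m := 2 * K) (by ring)
  have hne : x ≠ x + 2 * K := by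
    rw [Ne, left_eq_add]
    norm_cast
    rw [ZMod.natCast_eq_zero_iff]
    have hK := NeZero.ne K
    intro h
    have := Nat.le_of_dvd (by omega) h
    omega
  have h := congrArg (· (2 * x)) (hD.dihedral_mapDomain_eq_zero 0 t)
  have hset : ({v | 2 * v = 2 * x} : Finset (ZMod (4 * K))) = {x, x + 2 * K} := by
    ext v
    simp [hfib]
  simpa only [sub_zero, mapDomain_apply_eq_sum_filter, hset, Finset.sum_pair hne, coe_zero,
    Pi.zero_apply] using h

end Dihedral

/-- For the dihedral quandle `Z_n` with `n = 4K` over a field of characteristic zero, the matrix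
coefficients of any derivation satisfy the symmetries `c_{t+2d}^x = c_t^{2t+2d-x}`,
`c_t^x = -c_t^{x+2K}` and `c_t^x = c_{t+2K}^{x+2K}`. -/
theorem dihedral_4k_derivation_symmetries {k : Type*} [Field k] [CharZero k]
    (K : ℕ) (hK : 1 ≤ K)
    (D : (ZMod (4 * K) →₀ k) →ₗ[k] (ZMod (4 * K) →₀ k))
    (hD : IsDerivation (fun x y : ZMod (4 * K) => 2 * y - x) D)
    (c : ZMod (4 * K) → ZMod (4 * K) → k)
    (hc : ∀ t u, D (Finsupp.single t 1) u = c t u) :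
    ∀ t x d : ZMod (4 * K),
      c (t + 2 * d) x = c t (2 * t + 2 * d - x) ∧
      c t x = - c t (x + 2 * (K : ZMod (4 * K))) ∧
      c t x = c (t + 2 * (K : ZMod (4 * K))) (x + 2 * (K : ZMod (4 * K))) := by
  have : NeZero K := ⟨by omega⟩
  have reflect := hD.dihedral_apply_single_add_two_mul
  intro t x d
  simp only [← hc]
  refine ⟨reflect t d x, ?_, ?_⟩
  · linear_combination hD.dihedral_apply_add_apply_add_two_mul_eq_zero t x
  · have h0 := reflect t 0 x
    rw [mul_zero, add_zero, add_zero] at h0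
    rw [h0, reflect t K (x + 2 * K)]
    congr 1
    ring
end

section
/- Let k be a field of characteristic zero, let K be an odd positive integer, set n = 2K, and let X = Z_n be the dihedral quandle (x▷y = 2y − x in Z_n). Let D be a derivation of the quandle algebra k[X], with matrix coefficients defined by D(e_t) = Σ_x c_t^x e_x. Then for all t, x, d ∈ Z_n (all index arithmetic in Z_n): c_{t+2d}^x = c_t^{2t+2d−x} and c_t^x = −c_t^{x+K}. -/
open Finsupp

section QuandleAlgebra

variable {k X : Type*} [Field k] (op : X → X → X)

theorem qmul_single_s9 (a : X) (r : k) (g : X →₀ k) :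
    qmul op (single a r) g = r • mapDomain (op a) g := by
  rw [qmul, lsum_single, LinearMap.toSpanSingleton_apply, LinearMap.smul_apply, lsum_apply,
    mapDomain]
  congr 1
  refine sum_congr fun y _ => ?_
  rw [LinearMap.toSpanSingleton_apply, smul_single', mul_one]

theorem qmul_single_one_right (b : X) (f : X →₀ k) :
    qmul op f (single b 1) = mapDomain (op · b) f := by
  induction f using induction_linear with
  | zero => simp
  | add f g hf hg => rw [map_add, LinearMap.add_apply, hf, hg, mapDomain_add]
  | single a r => rw [qmul_single_s9, mapDomain_single, mapDomain_single, smul_single', mul_one]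

end QuandleAlgebra

noncomputable def doublingCoeff {k A : Type*} [Field k] [CommRing A]
    (D : (A →₀ k) →ₗ[k] (A →₀ k)) (b m : A) : k :=
  mapDomain (2 * ·) (D (single b 1)) m

theorem IsDerivation.apply_single_two_mul_sub {k A : Type*} [Field k] [CommRing A]
    {D : (A →₀ k) →ₗ[k] (A →₀ k)} (hD : IsDerivation (fun x y : A => 2 * y - x) D)
    (a b u : A) :
    D (single (2 * b - a) 1) u = D (single a 1) (2 * b - u) + doublingCoeff D b (u + a) := by
  have h := DFunLike.congr_fun (hD (single a 1) (single b 1)) u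
  rw [qmul_single_s9, one_smul, mapDomain_single, qmul_single_one_right, qmul_single_s9, one_smul,
    Finsupp.add_apply] at h
  have hreflect : Function.Injective fun x : A => 2 * b - x := sub_right_injective
  rw [h, doublingCoeff]
  congr 1
  · conv_lhs => rw [← sub_sub_cancel (2 * b) u]
    exact mapDomain_apply hreflect _ _
  · rw [show (fun y : A => 2 * y - a) = (· - a) ∘ (2 * ·) from rfl, mapDomain_comp]
    exact mapDomain_equiv_apply (f := Equiv.subRight a) _ u

namespace ZMod

variable {K : ℕ}

theorem natCast_add_natCast_self (K : ℕ) : (K : ZMod (2 * K)) + K = 0 := by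
  rw [← Nat.cast_add, ← two_mul, natCast_self]

theorem two_mul_eq_zero_iff_s9 [NeZero K] {z : ZMod (2 * K)} : 2 * z = 0 ↔ z = 0 ∨ z = K := by
  refine ⟨fun h => ?_, ?_⟩
  · obtain ⟨n, hlt, rfl⟩ : ∃ n < 2 * K, (n : ZMod (2 * K)) = z :=
      ⟨z.val, val_lt z, natCast_zmod_val z⟩
    obtain ⟨m, hm⟩ : K ∣ n := by
      have h2n : ((2 * n : ℕ) : ZMod (2 * K)) = 0 := by exact_mod_cast h
      rw [natCast_eq_zero_iff] at h2n
      exact Nat.dvd_of_mul_dvd_mul_left two_pos h2n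
    have hm2 : m < 2 := by
      rw [hm] at hlt
      exact Nat.lt_of_mul_lt_mul_left (a := K) (by linarith)
    interval_cases m <;> simp [hm]
  · rintro (rfl | rfl)
    · exact mul_zero 2
    · exact (two_mul _).trans (natCast_add_natCast_self K)

theorem two_mul_eq_two_mul_iff_s9 [NeZero K] {x y : ZMod (2 * K)} :
    2 * y = 2 * x ↔ y = x ∨ y = x + K := by
  rw [← sub_eq_zero, ← mul_sub, two_mul_eq_zero_iff_s9, sub_eq_zero, sub_eq_iff_eq_add']

theorem two_mul_ne_natCast (hK : Odd K) (z : ZMod (2 * K)) : 2 * z ≠ K := by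
  intro h
  have h2 := congrArg (castHom (dvd_mul_right 2 K) (ZMod 2)) h
  rw [map_mul, map_natCast, map_ofNat, natCast_eq_one_iff_odd.mpr hK,
    show (2 : ZMod 2) = 0 from rfl, zero_mul] at h2
  exact zero_ne_one h2

theorem exists_eq_two_mul_or_eq_two_mul_add (hK : Odd K) (m : ZMod (2 * K)) :
    (∃ y, m = 2 * y) ∨ ∃ y, m = 2 * y + K := by
  obtain ⟨n, rfl⟩ := intCast_surjective m
  obtain ⟨i, rfl⟩ := hK
  rcases Int.even_or_odd' n with ⟨j, rfl | rfl⟩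
  · exact .inl ⟨j, by push_cast; ring⟩
  · exact .inr ⟨j - i, by push_cast; ring⟩

theorem exists_two_pow_totient_eq_one_add_mul (hK : Odd K) :
    ∃ m : ZMod (2 * K), (2 : ZMod (2 * K)) ^ K.totient = 1 + K * m := by
  have hmod := Nat.ModEq.pow_totient (Nat.coprime_two_left.mpr hK)
  obtain ⟨m, hm⟩ := (Nat.modEq_iff_dvd' Nat.one_le_two_pow).mp hmod.symm
  have hpow : 2 ^ K.totient = 1 + K * m := by
    have := Nat.one_le_two_pow (n := K.totient)
    omega
  exact ⟨m, by exact_mod_cast congrArg (Nat.cast (R := ZMod (2 * K))) hpow⟩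

end ZMod

section Folding
variable {k : Type*} [Field k] {K : ℕ}

theorem mapDomain_two_mul_apply_two_mul [NeZero K] (f : ZMod (2 * K) →₀ k) (x : ZMod (2 * K)) :
    mapDomain (2 * ·) f (2 * x) = f x + f (x + K) := by
  have hshift : x + K ≠ x := by
    rw [Ne, add_eq_left, ZMod.natCast_eq_zero_iff]
    exact fun h => (NeZero.ne K) (Nat.eq_zero_of_dvd_of_lt h (by linarith [NeZero.pos K]))
  induction f using induction_linear with
  | zero => simp
  | add f g hf hg => simp only [mapDomain_add, Finsupp.add_apply, hf, hg]; ring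
  | single y r =>
    simp only [mapDomain_single, single_apply, ZMod.two_mul_eq_two_mul_iff_s9]
    split_ifs <;> simp_all

theorem mapDomain_two_mul_apply_two_mul_add (hK : Odd K) (f : ZMod (2 * K) →₀ k)
    (x : ZMod (2 * K)) : mapDomain (2 * ·) f (2 * x + K) = 0 := by
  refine mapDomain_of_notMem_range _ _ ?_
  rintro ⟨y, hy⟩
  exact ZMod.two_mul_ne_natCast hK (y - x) (by linear_combination hy)

end Folding

theorem eq_zero_of_eq_two_mul_apply_two_mul {R k : Type*} [Ring R] [Field k] [CharZero k]
    {f : R → k} {N : R} {j : ℕ} (hj : j ≠ 0) (hpow : ∃ m : R, (2 : R) ^ j = 1 + N * m)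
    (hper : ∀ z w, f (z + N * w) = f z) (hdouble : ∀ z, f z = 2 * f (2 * z)) (z : R) :
    f z = 0 := by
  have hiter : ∀ i z, f z = 2 ^ i * f (2 ^ i * z) := by
    intro i
    induction i with
    | zero => simp
    | succ i ih =>
      intro z
      rw [ih, hdouble, ← mul_assoc, ← mul_assoc, ← pow_succ, ← pow_succ']
  obtain ⟨m, hm⟩ := hpow
  have hfix : f z = 2 ^ j * f z :=
    calc f z = 2 ^ j * f (2 ^ j * z) := hiter j z
      _ = 2 ^ j * f z := by rw [hm, add_mul, one_mul, mul_assoc, hper]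
  have h2j : (2 : k) ^ j - 1 ≠ 0 :=
    sub_ne_zero.mpr (by exact_mod_cast (Nat.one_lt_two_pow hj).ne')
  have hmul : ((2 : k) ^ j - 1) * f z = 0 := by linear_combination -hfix
  exact (mul_eq_zero.mp hmul).resolve_left h2j

section DihedralDerivation

variable {k : Type*} [Field k] {K : ℕ}
  {D : (ZMod (2 * K) →₀ k) →ₗ[k] (ZMod (2 * K) →₀ k)}

theorem IsDerivation.doublingCoeff_leibniz (hK : Odd K)
    (hD : IsDerivation (fun x y : ZMod (2 * K) => 2 * y - x) D) (a b q : ZMod (2 * K)) :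
    doublingCoeff D (2 * b - a) (2 * (2 * q - a)) =
      doublingCoeff D a (2 * (2 * b - 2 * q + a)) + doublingCoeff D b (2 * q) := by
  have : NeZero K := ⟨hK.pos.ne'⟩
  have h1 := hD.apply_single_two_mul_sub a b (2 * q - a)
  have h2 := hD.apply_single_two_mul_sub a b (2 * q - a + K)
  rw [show 2 * q - a + K + a = 2 * q + K by ring, doublingCoeff,
    mapDomain_two_mul_apply_two_mul_add hK, add_zero,
    show 2 * b - (2 * q - a + K) = 2 * b - 2 * q + a + K by
      linear_combination -ZMod.natCast_add_natCast_self K] at h2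
  rw [show 2 * q - a + a = 2 * q by ring,
    show 2 * b - (2 * q - a) = 2 * b - 2 * q + a by ring] at h1
  rw [doublingCoeff, doublingCoeff, mapDomain_two_mul_apply_two_mul,
    mapDomain_two_mul_apply_two_mul, h1, h2]
  ring

theorem IsDerivation.doublingCoeff_eq_two_mul (hK : Odd K)
    (hD : IsDerivation (fun x y : ZMod (2 * K) => 2 * y - x) D) (p z : ZMod (2 * K)) :
    doublingCoeff D p (2 * (p + z)) = 2 * doublingCoeff D p (2 * (p + 2 * z)) := by
  set g : ZMod (2 * K) → k := fun z => doublingCoeff D p (2 * (p + z))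
  have hrow : ∀ z, g (2 * z) = g (-(2 * z)) + g z := by
    intro z
    convert hD.doublingCoeff_leibniz hK p p (p + z) using 3 <;> ring
  have hodd : ∀ z, g z + g (-z) = 0 := by
    intro z
    have h := hrow (-z)
    rw [mul_neg, neg_neg] at h
    linear_combination -hrow z - h
  show g z = 2 * g (2 * z)
  linear_combination -hrow z - hodd (2 * z)

theorem IsDerivation.doublingCoeff_eq_zero [CharZero k] (hK : Odd K)
    (hD : IsDerivation (fun x y : ZMod (2 * K) => 2 * y - x) D) (b m : ZMod (2 * K)) :
    doublingCoeff D b m = 0 := by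
  have heven : ∀ x, doublingCoeff D b (2 * x) = 0 := by
    intro x
    have hper (z w : ZMod (2 * K)) :
        doublingCoeff D b (2 * (b + (z + K * w))) = doublingCoeff D b (2 * (b + z)) := by
      congr 1
      linear_combination w * ZMod.natCast_add_natCast_self K
    simpa using eq_zero_of_eq_two_mul_apply_two_mul (Nat.totient_pos.mpr hK.pos).ne'
      (ZMod.exists_two_pow_totient_eq_one_add_mul hK) hper (hD.doublingCoeff_eq_two_mul hK b)
      (x - b)
  rcases ZMod.exists_eq_two_mul_or_eq_two_mul_add hK m with ⟨y, rfl⟩ | ⟨y, rfl⟩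
  · exact heven y
  · exact mapDomain_two_mul_apply_two_mul_add hK _ y

end DihedralDerivation

theorem dihedral_2k_derivation_symmetries_general {k : Type*} [Field k] [CharZero k]
    (K : ℕ) (hK : Odd K)
    (D : (ZMod (2 * K) →₀ k) →ₗ[k] (ZMod (2 * K) →₀ k))
    (hD : IsDerivation (fun x y : ZMod (2 * K) => 2 * y - x) D)
    (c : ZMod (2 * K) → ZMod (2 * K) → k)
    (hc : ∀ t u, D (Finsupp.single t 1) u = c t u) :
    ∀ t x d : ZMod (2 * K),
      c (t + 2 * d) x = c t (2 * t + 2 * d - x) ∧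
      c t x = - c t (x + (K : ZMod (2 * K))) := by
  have : NeZero K := ⟨hK.pos.ne'⟩
  intro t x d
  constructor
  · have h := hD.apply_single_two_mul_sub t (t + d) x
    rw [hD.doublingCoeff_eq_zero hK, add_zero, hc, hc] at h
    convert h using 2 <;> ring
  · have h : doublingCoeff D t (2 * x) = _ := mapDomain_two_mul_apply_two_mul _ x
    rw [hD.doublingCoeff_eq_zero hK, hc, hc] at h
    linear_combination -h

/-- For the dihedral quandle `Z_n` with `n = 2K`, `K` odd, over a field of characteristic zero,
the matrix coefficients of any derivation satisfy `c_{t+2d}^x = c_t^{2t+2d-x}` and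
`c_t^x = -c_t^{x+K}`. -/
theorem dihedral_2k_derivation_symmetries {k : Type*} [Field k] [CharZero k]
    (K : ℕ) (hK : Odd K) (hpos : 0 < K)
    (D : (ZMod (2 * K) →₀ k) →ₗ[k] (ZMod (2 * K) →₀ k))
    (hD : IsDerivation (fun x y : ZMod (2 * K) => 2 * y - x) D)
    (c : ZMod (2 * K) → ZMod (2 * K) → k)
    (hc : ∀ t u, D (Finsupp.single t 1) u = c t u) :
    ∀ t x d : ZMod (2 * K),
      c (t + 2 * d) x = c t (2 * t + 2 * d - x) ∧
      c t x = - c t (x + (K : ZMod (2 * K))) :=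
  dihedral_2k_derivation_symmetries_general K hK D hD c hc
end
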